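/- Let Z = (Z₀, Z₁) be a bivariate Gaussian vector with mean 0 and positive definite covariance Σ, let 𝒜 = {(z₀,z₁) ∈ ℝ² : z₀ ≤ z₁} and 𝒜_∘ = {(z,z) : z ∈ ℝ}. Define q_Z(z) = (Z - z)ᵀ Σ⁻¹ (Z - z), let Z_• minimize q_Z over 𝒜 and Z_∘ minimize q_Z over 𝒜_∘, and set L = q_Z(Z_∘) - q_Z(Z_•). Then P(L = 0) = 1/2 and for every x > 0, P(L > x) = (1/2) P(χ²₁ > x), i.e., L is distributed as W·χ²₁ with W ~ Bernoulli(1/2) independent of χ²₁. -/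

import Mathlib

open MeasureTheory ProbabilityTheory Matrix

/-- The centered bivariate Gaussian measure with positive definite covariance `S`,
defined via its density with respect to Lebesgue measure on `Fin 2 → ℝ`. -/
noncomputable def gaussian2 (S : Matrix (Fin 2) (Fin 2) ℝ) : Measure (Fin 2 → ℝ) :=
  volume.withDensity fun z =>
    ENNReal.ofReal ((2 * Real.pi)⁻¹ * (Real.sqrt S.det)⁻¹ *
      Real.exp (-(1 / 2) * (z ⬝ᵥ (S⁻¹ *ᵥ z))))

/-- The squared `Σ`-Mahalanobis distance `q(z, w) = (z-w)ᵀ Σ⁻¹ (z-w)`. -/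
noncomputable def mahalanobisSq (S : Matrix (Fin 2) (Fin 2) ℝ) (z w : Fin 2 → ℝ) : ℝ :=
  (z - w) ⬝ᵥ (S⁻¹ *ᵥ (z - w))

/-!
The Mahalanobis distance from `z` to the diagonal `z₀ = z₁` is `(z₀ - z₁)² / σ²`, and to the
half-plane `z₀ ≤ z₁` it is `max (z₀ - z₁) 0 ² / σ²`, where `σ² = Σ₀₀ - 2 Σ₀₁ + Σ₁₁` is the
variance of `Z₀ - Z₁`: both lower bounds are Cauchy–Schwarz for the `Σ⁻¹` inner product, and both
are attained at `z - ((z₀ - z₁) / σ²) Σ (1, -1)`. Hence `L = min X 0 ²` with `X = (Z₀ - Z₁) / σ`.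
Writing `Σ = M Mᵀ` with `(M u)₀ - (M u)₁ = σ u₀`, the Gaussian `Z` is `M U` for a standard
Gaussian `U`, so `X = U₀` is standard normal. Then `L = 0` iff `X ≥ 0`, and for `x > 0`,
`L > x` iff `X < -√x`, which by symmetry has half the probability of `X² > x`, i.e. of `χ²₁ > x`.
-/

open Real Set
open scoped ENNReal NNReal

lemma gaussianReal_Iio_neg (v : ℝ≥0) (a : ℝ) :
    gaussianReal 0 v (Iio (-a)) = gaussianReal 0 v (Ioi a) := by
  conv_rhs => rw [← neg_zero, ← gaussianReal_map_neg,
    Measure.map_apply measurable_neg measurableSet_Ioi]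
  congr 1
  ext t
  simp

lemma gaussianReal_Ici_zero {v : ℝ≥0} (hv : v ≠ 0) : gaussianReal 0 v (Ici 0) = 1 / 2 := by
  have := nullSingletonClass_gaussianReal (μ := 0) hv
  have hhalves : gaussianReal 0 v (Iio 0) + gaussianReal 0 v (Ici 0) = 1 := by
    rw [← measure_union (Iio_disjoint_Ici le_rfl) measurableSet_Ici, Iio_union_Ici, measure_univ]
  have hsymm := gaussianReal_Iio_neg v 0
  rw [neg_zero] at hsymm
  rw [hsymm, measure_congr Ioi_ae_eq_Ici, ← two_mul] at hhalves
  rw [ENNReal.eq_div_iff two_ne_zero ENNReal.ofNat_ne_top, hhalves]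

lemma Real.image_sqrt_Ioi {x : ℝ} (hx : 0 ≤ x) : sqrt '' Ioi x = Ioi √x := by
  refine Subset.antisymm (image_subset_iff.mpr fun y hy => sqrt_lt_sqrt hx hy) fun t ht => ?_
  have ht0 : 0 ≤ t := (sqrt_nonneg x).trans ht.le
  exact ⟨t ^ 2, (sqrt_lt' ((sqrt_nonneg x).trans_lt ht)).mp ht, sqrt_sq ht0⟩

/-- The chi-squared law with one degree of freedom is `gammaMeasure (1 / 2) (1 / 2)`. -/
lemma gaussianReal_Ioi_sqrt {x : ℝ} (hx : 0 < x) :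
    gaussianReal 0 1 (Ioi √x) = 1 / 2 * gammaMeasure (1 / 2) (1 / 2) (Ioi x) := by
  have hderiv : ∀ y ∈ Ioi x, HasDerivWithinAt sqrt (1 / (2 * √y)) (Ioi x) y := fun y hy =>
    (hasDerivAt_sqrt (hx.trans hy).ne').hasDerivWithinAt
  have hinj : InjOn sqrt (Ioi x) := fun a ha b hb h =>
    (sqrt_inj (hx.trans ha).le (hx.trans hb).le).mp h
  rw [gaussianReal_apply _ one_ne_zero, ← image_sqrt_Ioi hx.le,
    lintegral_image_eq_lintegral_abs_deriv_mul measurableSet_Ioi hderiv hinj, gammaMeasure,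
    withDensity_apply _ measurableSet_Ioi, ← lintegral_const_mul' _ _ (by simp)]
  refine setLIntegral_congr_fun measurableSet_Ioi fun y hy => ?_
  have hy : 0 < y := hx.trans hy
  have hsy : 0 < √y := sqrt_pos.mpr hy
  rw [gammaPDF_of_nonneg hy.le, gaussianPDF, gaussianPDFReal,
    ← ENNReal.ofReal_mul (abs_nonneg _), show (1 / 2 : ℝ≥0∞) = ENNReal.ofReal (1 / 2) by simp,
    ← ENNReal.ofReal_mul (by norm_num)]
  congr 1
  rw [Gamma_one_half_eq, abs_of_pos (by positivity), ← sqrt_eq_rpow,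
    show (1 / 2 : ℝ) - 1 = -(1 / 2) by norm_num, rpow_neg hy.le, ← sqrt_eq_rpow]
  simp only [NNReal.coe_one, mul_one, sub_zero, sq_sqrt hy.le, sqrt_mul zero_le_two, one_div,
    sqrt_inv]
  ring_nf

lemma gaussianReal_setOf_sq_min_zero_eq_zero :
    gaussianReal 0 1 {t | min t 0 ^ 2 = 0} = 1 / 2 := by
  have hset : {t : ℝ | min t 0 ^ 2 = 0} = Ici 0 := by
    ext t
    simp
  rw [hset, gaussianReal_Ici_zero one_ne_zero]

lemma gaussianReal_setOf_lt_sq_min_zero {x : ℝ} (hx : 0 < x) :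
    gaussianReal 0 1 {t | x < min t 0 ^ 2} = 1 / 2 * gammaMeasure (1 / 2) (1 / 2) (Ioi x) := by
  have hset : {t : ℝ | x < min t 0 ^ 2} = Iio (-√x) := by
    ext t
    rw [mem_ofPred_eq, ← neg_sq, ← sqrt_lt hx.le (neg_nonneg.mpr (min_le_right t 0)), lt_neg,
      min_lt_iff, or_iff_left (neg_nonpos.mpr (sqrt_nonneg x)).not_gt, mem_Iio]
  rw [hset, gaussianReal_Iio_neg, gaussianReal_Ioi_sqrt hx]

lemma MeasurableEquiv.map_withDensity {α β : Type*} [MeasurableSpace α] [MeasurableSpace β]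
    (e : α ≃ᵐ β) (μ : Measure α) (f : α → ℝ≥0∞) :
    (μ.withDensity f).map e = (μ.map e).withDensity (f ∘ e.symm) := by
  ext s hs
  rw [e.map_apply, withDensity_apply _ (e.measurable hs), withDensity_apply _ hs,
    e.restrict_map, lintegral_map_equiv]
  simp

lemma gaussian2_one : gaussian2 1 = Measure.pi fun _ => gaussianReal 0 1 := by
  rw [gaussian2, ← (measurePreserving_finTwoArrow (gaussianReal 0 1)).symm.map_eq,
    gaussianReal_of_var_ne_zero _ one_ne_zero,
    prod_withDensity (measurable_gaussianPDF _ _) (measurable_gaussianPDF _ _),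
    ← Measure.volume_eq_prod, MeasurableEquiv.map_withDensity,
    (volume_preserving_finTwoArrow ℝ).symm.map_eq]
  refine congrArg _ (funext fun z => ?_)
  simp only [Function.comp_apply, MeasurableEquiv.symm_symm, MeasurableEquiv.finTwoArrow_apply,
    gaussianPDF, gaussianPDFReal, det_one, sqrt_one, inv_one, one_mulVec, dotProduct,
    Fin.sum_univ_two]
  rw [← ENNReal.ofReal_mul (by positivity)]
  congr 1
  rw [mul_mul_mul_comm, ← mul_inv, ← exp_add, NNReal.coe_one, mul_one, mul_one,
    mul_self_sqrt (by positivity)]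
  ring_nf

lemma Matrix.mulVec_dotProduct_inv_mul_mul_transpose_mulVec {n R : Type*} [Fintype n]
    [DecidableEq n] [CommRing R] {M : Matrix n n R} (hM : IsUnit M.det) (S : Matrix n n R)
    (u : n → R) : (M *ᵥ u) ⬝ᵥ ((M * S * Mᵀ)⁻¹ *ᵥ (M *ᵥ u)) = u ⬝ᵥ (S⁻¹ *ᵥ u) := by
  have hMt : IsUnit Mᵀ.det := by rwa [det_transpose]
  rw [mul_inv_rev, mul_inv_rev, mulVec_mulVec, Matrix.mul_assoc, Matrix.mul_assoc,
    nonsing_inv_mul _ hM, Matrix.mul_one, ← mulVec_mulVec, dotProduct_mulVec, ← vecMul_transpose,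
    vecMul_vecMul, mul_nonsing_inv _ hMt, vecMul_one]

lemma gaussian2_map_mulVec (S : Matrix (Fin 2) (Fin 2) ℝ) {M : Matrix (Fin 2) (Fin 2) ℝ}
    (hM : M.det ≠ 0) : (gaussian2 S).map (M *ᵥ ·) = gaussian2 (M * S * Mᵀ) := by
  have hT : Measurable (M *ᵥ ·) := by fun_prop
  have hvol : (volume : Measure (Fin 2 → ℝ)) = ENNReal.ofReal |M.det| • volume.map (M *ᵥ ·) := by
    rw [← funext (toLin'_apply M), map_matrix_volume_pi_eq_smul_volume_pi hM, smul_smul,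
      ← ENNReal.ofReal_mul (abs_nonneg _), ← abs_mul, mul_inv_cancel₀ hM, abs_one,
      ENNReal.ofReal_one, one_smul]
  have hdet : √(M * S * Mᵀ).det = |M.det| * √S.det := by
    rw [det_mul, det_mul, det_transpose, mul_right_comm, ← sq, sqrt_mul (sq_nonneg _),
      sqrt_sq_eq_abs]
  ext s hs
  rw [Measure.map_apply hT hs, gaussian2, gaussian2, withDensity_apply _ (hT hs),
    withDensity_apply _ hs]
  conv_rhs => rw [hvol]
  rw [Measure.restrict_smul, lintegral_smul_measure, setLIntegral_map hs (by fun_prop) hT,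
    smul_eq_mul, ← lintegral_const_mul' _ _ ENNReal.ofReal_ne_top]
  refine lintegral_congr fun u => ?_
  rw [← ENNReal.ofReal_mul (abs_nonneg _),
    mulVec_dotProduct_inv_mul_mul_transpose_mulVec hM.isUnit, hdet, mul_inv]
  congr 1
  field_simp

/-- The variance of `Z₀ - Z₁` when `Z` has covariance `S`. -/
def diffVar (S : Matrix (Fin 2) (Fin 2) ℝ) : ℝ := S 0 0 - 2 * S 0 1 + S 1 1

namespace Matrix

lemma dotProduct_inv_mulVec_fin_two {K : Type*} [Field K] (S : Matrix (Fin 2) (Fin 2) K)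
    (v : Fin 2 → K) :
    v ⬝ᵥ (S⁻¹ *ᵥ v) =
      (S 1 1 * v 0 ^ 2 - (S 0 1 + S 1 0) * v 0 * v 1 + S 0 0 * v 1 ^ 2) / S.det := by
  rw [inv_def, adjugate_fin_two, Ring.inverse_eq_inv']
  simp only [dotProduct, mulVec, Fin.sum_univ_two, smul_apply, of_apply, cons_val', cons_val_fin_one,
    cons_val_zero, cons_val_one, smul_eq_mul]
  ring

variable {S : Matrix (Fin 2) (Fin 2) ℝ}

lemma PosDef.apply_one_zero (hS : S.PosDef) : S 1 0 = S 0 1 := by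
  simpa using hS.1.apply 0 1

lemma PosDef.mulVec_one_neg_one_dotProduct (hS : S.PosDef) :
    (S *ᵥ ![1, -1]) ⬝ᵥ ![1, -1] = diffVar S := by
  simp only [dotProduct, mulVec, Fin.sum_univ_two, cons_val_zero, cons_val_one, cons_val_fin_one,
    hS.apply_one_zero, diffVar]
  ring

lemma PosDef.diffVar_pos (hS : S.PosDef) : 0 < diffVar S := by
  rw [← hS.mulVec_one_neg_one_dotProduct, dotProduct_comm, ← star_trivial ![(1 : ℝ), -1]]
  exact hS.dotProduct_mulVec_pos (by simp [funext_iff, Fin.forall_fin_two])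

lemma PosDef.sq_sub_le_diffVar_mul (hS : S.PosDef) (v : Fin 2 → ℝ) :
    (v 0 - v 1) ^ 2 ≤ diffVar S * (v ⬝ᵥ (S⁻¹ *ᵥ v)) := by
  rw [dotProduct_inv_mulVec_fin_two, hS.apply_one_zero, mul_div_assoc', le_div_iff₀ hS.det_pos,
    det_fin_two, hS.apply_one_zero, diffVar]
  nlinarith [sq_nonneg ((S 0 1 - S 1 1) * v 0 - (S 0 0 - S 0 1) * v 1)]

lemma PosDef.exists_mul_transpose_eq_fin_two (hS : S.PosDef) :
    ∃ M : Matrix (Fin 2) (Fin 2) ℝ, M.det ≠ 0 ∧ M * Mᵀ = S ∧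
      ∀ u, (M *ᵥ u) 0 - (M *ᵥ u) 1 = √(diffVar S) * u 0 := by
  have hc := hS.diffVar_pos
  have hcdef : diffVar S = S 0 0 - 2 * S 0 1 + S 1 1 := rfl
  have hd : S.det = S 0 0 * S 1 1 - S 0 1 ^ 2 := by rw [det_fin_two, hS.apply_one_zero]; ring
  set s := √(diffVar S)
  set a := √(S.det / diffVar S)
  have hs : 0 < s := sqrt_pos.mpr hc
  have ha : 0 < a := sqrt_pos.mpr (div_pos hS.det_pos hc)
  have hs2 : s ^ 2 = diffVar S := sq_sqrt hc.le
  have ha2 : a ^ 2 * diffVar S = S.det := by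
    rw [sq_sqrt (div_pos hS.det_pos hc).le]
    field_simp
  refine ⟨!![(S 0 0 - S 0 1) / s, a; (S 0 1 - S 1 1) / s, a], ?_, ?_, fun u => ?_⟩
  · rw [det_fin_two_of]
    field_simp
    rw [show S 0 0 - S 0 1 - (S 0 1 - S 1 1) = diffVar S by rw [hcdef]; ring]
    positivity
  · ext i j
    fin_cases i <;> fin_cases j <;>
      simp only [mul_apply, transpose_apply, of_apply, cons_val', cons_val_fin_one, cons_val_zero,
        cons_val_one, Fin.sum_univ_two, hS.apply_one_zero, Fin.zero_eta, Fin.mk_one] <;>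
      field_simp
    · linear_combination (a ^ 2 - S 0 0) * hs2 + ha2 + hd - S 0 0 * hcdef
    · linear_combination (a ^ 2 - S 0 1) * hs2 + ha2 + hd - S 0 1 * hcdef
    · linear_combination (a ^ 2 - S 0 1) * hs2 + ha2 + hd - S 0 1 * hcdef
    · linear_combination (a ^ 2 - S 1 1) * hs2 + ha2 + hd - S 1 1 * hcdef
  · simp only [mulVec, dotProduct, of_apply, cons_val', cons_val_fin_one, cons_val_zero,
      cons_val_one, Fin.sum_univ_two, add_sub_add_right_eq_sub]
    field_simp
    linear_combination -u 0 * hs2 - u 0 * hcdef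

end Matrix

variable {S : Matrix (Fin 2) (Fin 2) ℝ}

lemma gaussian2_map_sub_div_sqrt_diffVar (hS : S.PosDef) :
    (gaussian2 S).map (fun z => (z 0 - z 1) / √(diffVar S)) = gaussianReal 0 1 := by
  obtain ⟨M, hM, hMS, hMsub⟩ := hS.exists_mul_transpose_eq_fin_two
  have hs : √(diffVar S) ≠ 0 := (sqrt_pos.mpr hS.diffVar_pos).ne'
  have hwhiten : gaussian2 S = (gaussian2 1).map (M *ᵥ ·) := by
    rw [gaussian2_map_mulVec 1 hM, Matrix.mul_one, hMS]
  have hcoord : (fun z : Fin 2 → ℝ => (z 0 - z 1) / √(diffVar S)) ∘ (M *ᵥ ·) = Function.eval 0 :=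
    funext fun u => by
      simp only [Function.comp_apply, Function.eval, hMsub]
      field_simp
  rw [hwhiten, Measure.map_map (by fun_prop) (by fun_prop), hcoord, gaussian2_one,
    Measure.pi_map_eval]
  simp

/-- The Mahalanobis projection of `z` onto the diagonal `{w | w 0 = w 1}`. -/
noncomputable def diagProj (S : Matrix (Fin 2) (Fin 2) ℝ) (z : Fin 2 → ℝ) : Fin 2 → ℝ :=
  z - ((z 0 - z 1) / diffVar S) • (S *ᵥ ![1, -1])

lemma diagProj_apply_zero_eq_one (hS : S.PosDef) (z : Fin 2 → ℝ) :
    diagProj S z 0 = diagProj S z 1 := by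
  have h : (S *ᵥ ![1, -1]) 0 - (S *ᵥ ![1, -1]) 1 = diffVar S := by
    rw [← hS.mulVec_one_neg_one_dotProduct]
    simp [dotProduct, Fin.sum_univ_two, sub_eq_add_neg]
  have hc := hS.diffVar_pos.ne'
  simp only [diagProj, Pi.sub_apply, Pi.smul_apply, smul_eq_mul]
  field_simp
  linear_combination -(z 0 - z 1) * h

lemma mahalanobisSq_diagProj (hS : S.PosDef) (z : Fin 2 → ℝ) :
    mahalanobisSq S z (diagProj S z) = (z 0 - z 1) ^ 2 / diffVar S := by
  rw [mahalanobisSq, diagProj, sub_sub_cancel, mulVec_smul, mulVec_mulVec,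
    nonsing_inv_mul _ hS.det_pos.ne'.isUnit, one_mulVec, smul_dotProduct, dotProduct_smul,
    hS.mulVec_one_neg_one_dotProduct, smul_eq_mul, smul_eq_mul]
  field_simp [hS.diffVar_pos.ne']

lemma mahalanobisSq_nonneg (hS : S.PosDef) (z w : Fin 2 → ℝ) : 0 ≤ mahalanobisSq S z w := by
  have h := hS.inv.posSemidef.dotProduct_mulVec_nonneg (z - w)
  rwa [star_trivial] at h

lemma div_diffVar_le_mahalanobisSq (hS : S.PosDef) (z w : Fin 2 → ℝ) :
    ((z 0 - z 1) - (w 0 - w 1)) ^ 2 / diffVar S ≤ mahalanobisSq S z w := by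
  rw [div_le_iff₀' hS.diffVar_pos, mahalanobisSq]
  calc ((z 0 - z 1) - (w 0 - w 1)) ^ 2 = ((z - w) 0 - (z - w) 1) ^ 2 := by
        simp only [Pi.sub_apply]
        ring
    _ ≤ _ := hS.sq_sub_le_diffVar_mul (z - w)

lemma mahalanobisSq_eq_of_isMinOn_diag (hS : S.PosDef) {z y : Fin 2 → ℝ} (hy : y 0 = y 1)
    (hmin : IsMinOn (mahalanobisSq S z) {w | w 0 = w 1} y) :
    mahalanobisSq S z y = (z 0 - z 1) ^ 2 / diffVar S := by
  refine le_antisymm ?_ ?_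
  · exact (isMinOn_iff.mp hmin _ (diagProj_apply_zero_eq_one hS z)).trans_eq
      (mahalanobisSq_diagProj hS z)
  · simpa [hy] using div_diffVar_le_mahalanobisSq hS z y

lemma mahalanobisSq_eq_of_isMinOn_le (hS : S.PosDef) {z y : Fin 2 → ℝ} (hy : y 0 ≤ y 1)
    (hmin : IsMinOn (mahalanobisSq S z) {w | w 0 ≤ w 1} y) :
    mahalanobisSq S z y = max (z 0 - z 1) 0 ^ 2 / diffVar S := by
  rcases le_total (z 0 - z 1) 0 with hz | hz
  · have hzz : mahalanobisSq S z z = 0 := by simp [mahalanobisSq]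
    rw [max_eq_right hz, zero_pow two_ne_zero, zero_div]
    exact le_antisymm ((isMinOn_iff.mp hmin z (sub_nonpos.mp hz)).trans_eq hzz)
      (mahalanobisSq_nonneg hS z y)
  · rw [max_eq_left hz]
    refine le_antisymm ?_ ?_
    · exact (isMinOn_iff.mp hmin _ (diagProj_apply_zero_eq_one hS z).le).trans_eq
        (mahalanobisSq_diagProj hS z)
    · refine le_trans ?_ (div_diffVar_le_mahalanobisSq hS z y)
      exact div_le_div_of_nonneg_right (by nlinarith) hS.diffVar_pos.le

lemma mahalanobisSq_sub_eq_of_isMinOn (hS : S.PosDef) {z y₀ y₁ : Fin 2 → ℝ}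
    (hy₀ : y₀ 0 = y₀ 1) (hmin₀ : IsMinOn (mahalanobisSq S z) {w | w 0 = w 1} y₀)
    (hy₁ : y₁ 0 ≤ y₁ 1) (hmin₁ : IsMinOn (mahalanobisSq S z) {w | w 0 ≤ w 1} y₁) :
    mahalanobisSq S z y₀ - mahalanobisSq S z y₁ = min ((z 0 - z 1) / √(diffVar S)) 0 ^ 2 := by
  rw [mahalanobisSq_eq_of_isMinOn_diag hS hy₀ hmin₀, mahalanobisSq_eq_of_isMinOn_le hS hy₁ hmin₁,
    ← sub_div, ← zero_div √(diffVar S), min_div_div_right (sqrt_nonneg _), div_pow,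
    sq_sqrt hS.diffVar_pos.le]
  rcases le_total (z 0 - z 1) 0 with h | h <;> simp [h]

theorem likelihood_ratio_limit_law_general
    {Ω : Type*} [MeasureSpace Ω]
    (S : Matrix (Fin 2) (Fin 2) ℝ) (hS : S.PosDef)
    (Z Zbullet Zcirc : Ω → Fin 2 → ℝ)
    (hZ : Measure.map Z ℙ = gaussian2 S)
    (hZbullet : ∀ ω, Zbullet ω ∈ {z : Fin 2 → ℝ | z 0 ≤ z 1} ∧
      ∀ y ∈ {z : Fin 2 → ℝ | z 0 ≤ z 1},
        mahalanobisSq S (Z ω) (Zbullet ω) ≤ mahalanobisSq S (Z ω) y)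
    (hZcirc : ∀ ω, Zcirc ω ∈ {z : Fin 2 → ℝ | z 0 = z 1} ∧
      ∀ y ∈ {z : Fin 2 → ℝ | z 0 = z 1},
        mahalanobisSq S (Z ω) (Zcirc ω) ≤ mahalanobisSq S (Z ω) y)
    (L : Ω → ℝ)
    (hL : ∀ ω, L ω = mahalanobisSq S (Z ω) (Zcirc ω) - mahalanobisSq S (Z ω) (Zbullet ω)) :
    ℙ {ω | L ω = 0} = 1 / 2 ∧
    ∀ x : ℝ, 0 < x →
      ℙ {ω | x < L ω}
        = (1 / 2) * ProbabilityTheory.gammaMeasure (1 / 2) (1 / 2) (Set.Ioi x) := by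
  set X : (Fin 2 → ℝ) → ℝ := fun z => (z 0 - z 1) / √(diffVar S)
  have hX : Measurable X := by fun_prop
  have hLX : L = (fun t => min t 0 ^ 2) ∘ X ∘ Z := funext fun ω => by
    rw [hL]
    exact mahalanobisSq_sub_eq_of_isMinOn hS (hZcirc ω).1 (isMinOn_iff.mpr (hZcirc ω).2)
      (hZbullet ω).1 (isMinOn_iff.mpr (hZbullet ω).2)
  have hZm : AEMeasurable Z ℙ := by
    refine AEMeasurable.of_map_ne_zero fun h => ?_
    have := gaussian2_map_sub_div_sqrt_diffVar hS
    rw [← hZ, h, Measure.map_zero] at this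
    exact IsProbabilityMeasure.ne_zero _ this.symm
  have hlaw : ∀ B, MeasurableSet B → ℙ ((X ∘ Z) ⁻¹' B) = gaussianReal 0 1 B := fun B hB => by
    rw [← gaussian2_map_sub_div_sqrt_diffVar hS, ← hZ,
      AEMeasurable.map_map_of_aemeasurable hX.aemeasurable hZm,
      Measure.map_apply_of_aemeasurable (hX.comp_aemeasurable hZm) hB]
  subst hLX
  refine ⟨?_, fun x hx => ?_⟩
  · rw [← gaussianReal_setOf_sq_min_zero_eq_zero]
    exact hlaw {t | min t 0 ^ 2 = 0} (measurableSet_eq_fun (by fun_prop) measurable_const)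
  · rw [← gaussianReal_setOf_lt_sq_min_zero hx]
    exact hlaw {t | x < min t 0 ^ 2} (measurableSet_lt measurable_const (by fun_prop))

/-- Corollary 1: let `Z ~ N(0, Σ)` with `Σ` positive definite, `𝒜 = {z₀ ≤ z₁}`,
`𝒜∘ = {z₀ = z₁}`, and let `Z•`, `Z∘` be the Mahalanobis projections of `Z` onto `𝒜`
and `𝒜∘`. With `L = q_Z(Z∘) - q_Z(Z•)`, one has `P(L = 0) = 1/2` and, for `x > 0`,
`P(L > x) = (1/2) P(χ²₁ > x)`; i.e. `L ~ W χ²₁` with `W ~ Bernoulli(1/2)` independent. -/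
theorem likelihood_ratio_limit_law
    {Ω : Type*} [MeasureSpace Ω] [IsProbabilityMeasure (ℙ : Measure Ω)]
    (S : Matrix (Fin 2) (Fin 2) ℝ) (hS : S.PosDef)
    (Z Zbullet Zcirc : Ω → Fin 2 → ℝ)
    (hZ : Measure.map Z ℙ = gaussian2 S)
    (hZbullet : ∀ ω, Zbullet ω ∈ {z : Fin 2 → ℝ | z 0 ≤ z 1} ∧
      ∀ y ∈ {z : Fin 2 → ℝ | z 0 ≤ z 1},
        mahalanobisSq S (Z ω) (Zbullet ω) ≤ mahalanobisSq S (Z ω) y)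
    (hZcirc : ∀ ω, Zcirc ω ∈ {z : Fin 2 → ℝ | z 0 = z 1} ∧
      ∀ y ∈ {z : Fin 2 → ℝ | z 0 = z 1},
        mahalanobisSq S (Z ω) (Zcirc ω) ≤ mahalanobisSq S (Z ω) y)
    (L : Ω → ℝ)
    (hL : ∀ ω, L ω = mahalanobisSq S (Z ω) (Zcirc ω) - mahalanobisSq S (Z ω) (Zbullet ω)) :
    ℙ {ω | L ω = 0} = 1 / 2 ∧
    ∀ x : ℝ, 0 < x →
      ℙ {ω | x < L ω}
        = (1 / 2) * ProbabilityTheory.gammaMeasure (1 / 2) (1 / 2) (Set.Ioi x) :=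
  likelihood_ratio_limit_law_general S hS Z Zbullet Zcirc hZ hZbullet hZcirc L hL
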